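/- Let G be a finite group. If 𝒞 is a clique in the reduced power graph 𝒫_R(G), then the subgroup ⟨𝒞⟩ generated by 𝒞 is cyclic. -/

import Mathlib

/-- The closed neighborhood of a vertex `x` in a simple graph. -/
def closedNbhd {V : Type*} (Γ : SimpleGraph V) (x : V) : Set V :=
  insert x (Γ.neighborSet x)

/-- `z` strongly resolves `x` and `y` if some shortest path from `z` to `x`
contains `y`, or some shortest path from `z` to `y` contains `x`. -/
def StronglyResolves {V : Type*} (Γ : SimpleGraph V) (z x y : V) : Prop :=
  (∃ w : Γ.Walk z x, w.IsPath ∧ w.length = Γ.dist z x ∧ y ∈ w.support) ∨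
  (∃ w : Γ.Walk z y, w.IsPath ∧ w.length = Γ.dist z y ∧ x ∈ w.support)

/-- `S` is a strong resolving set if every pair of distinct vertices is
strongly resolved by some vertex of `S`. -/
def IsStrongResolvingSet {V : Type*} (Γ : SimpleGraph V) (S : Set V) : Prop :=
  ∀ x y : V, x ≠ y → ∃ z ∈ S, StronglyResolves Γ z x y

/-- The strong metric dimension: the minimum size of a strong resolving set. -/
noncomputable def sdim {V : Type*} [Fintype V] (Γ : SimpleGraph V) : ℕ :=
  sInf {k | ∃ S : Finset V, S.card = k ∧ IsStrongResolvingSet Γ ↑S}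

/-- The equivalence relation `x ≈ y` iff `N[x] = N[y]`. -/
def nbhdSetoid {V : Type*} (Γ : SimpleGraph V) : Setoid V :=
  ⟨fun x y => closedNbhd Γ x = closedNbhd Γ y,
   ⟨fun _ => rfl, Eq.symm, Eq.trans⟩⟩

/-- The reduced graph `ℛ_Γ`: vertices are the `≈`-classes, two distinct classes
being adjacent iff some (equivalently, any) pair of their members is adjacent in `Γ`. -/
def reducedGraph {V : Type*} (Γ : SimpleGraph V) :
    SimpleGraph (Quotient (nbhdSetoid Γ)) where
  Adj a b := a ≠ b ∧ ∃ x y : V,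
    Quotient.mk (nbhdSetoid Γ) x = a ∧ Quotient.mk (nbhdSetoid Γ) y = b ∧ Γ.Adj x y
  symm := by constructor; rintro a b ⟨h, x, y, hx, hy, hadj⟩; exact ⟨h.symm, y, x, hy, hx, hadj.symm⟩
  loopless := by constructor; rintro a ⟨h, -⟩; exact h rfl

/-- The order supergraph `𝒮(G)`: distinct `x, y` are adjacent iff
`o(x) ∣ o(y)` or `o(y) ∣ o(x)`. -/
def orderSupergraph (G : Type*) [Group G] : SimpleGraph G where
  Adj x y := x ≠ y ∧ (orderOf x ∣ orderOf y ∨ orderOf y ∣ orderOf x)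
  symm := by constructor; rintro x y ⟨h, h2⟩; exact ⟨h.symm, h2.symm⟩
  loopless := by constructor; rintro x ⟨h, -⟩; exact h rfl

/-- The enhanced power graph `𝒫_E(G)`: distinct `x, y` are adjacent iff
`⟨x, y⟩` is cyclic. -/
def enhancedPowerGraph (G : Type*) [Group G] : SimpleGraph G where
  Adj x y := x ≠ y ∧ IsCyclic (Subgroup.closure ({x, y} : Set G))
  symm := by constructor; rintro x y ⟨h, h2⟩; rw [Set.pair_comm] at h2; exact ⟨h.symm, h2⟩
  loopless := by constructor; rintro x ⟨h, -⟩; exact h rfl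

/-- The reduced power graph `𝒫_R(G)`: distinct `x, y` are adjacent iff
`⟨x⟩ ⊂ ⟨y⟩` or `⟨y⟩ ⊂ ⟨x⟩`. -/
def reducedPowerGraph (G : Type*) [Group G] : SimpleGraph G where
  Adj x y := Subgroup.zpowers x < Subgroup.zpowers y ∨ Subgroup.zpowers y < Subgroup.zpowers x
  symm := by constructor; rintro x y h; exact Or.symm h
  loopless := by constructor; rintro x h; rcases h with h | h <;> exact lt_irrefl _ h

/-- `Ω n`: the number of prime factors of `n` counted with multiplicity. -/
def bigOmega (n : ℕ) : ℕ := n.primeFactorsList.length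

/-- A maximal cyclic subgroup: a cyclic subgroup not properly contained in any
cyclic subgroup. -/
def IsMaxCyclic {G : Type*} [Group G] (M : Subgroup G) : Prop :=
  IsCyclic M ∧ ∀ N : Subgroup G, IsCyclic N → M ≤ N → M = N

/-- `ℳ_g`: the set of maximal cyclic subgroups containing `g`. -/
def maxCyclicOn {G : Type*} [Group G] (g : G) : Set (Subgroup G) :=
  {M | IsMaxCyclic M ∧ g ∈ M}


/-
A clique of `𝒫_R(G)` is a chain under `x ↦ ⟨x⟩`. Being finite, the chain has a largest member `⟨m⟩`,
and then `⟨C⟩ = ⟨m⟩`.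
-/

open Subgroup

theorem IsChain.exists_forall_le_of_finite {ι α : Type*} [Preorder α] {f : ι → α} {s : Set ι}
    (hchain : IsChain (fun x y => f x ≤ f y) s) (hfin : s.Finite) (hne : s.Nonempty) :
    ∃ m ∈ s, ∀ x ∈ s, f x ≤ f m := by
  obtain ⟨m, hm, hmax⟩ := hfin.exists_maximalFor f s hne
  refine ⟨m, hm, fun x hx => ?_⟩
  rcases eq_or_ne x m with rfl | hxm
  · exact le_rfl
  · exact (hchain hx hm hxm).elim id (hmax hx)

theorem Subgroup.closure_eq_zpowers_of_forall_zpowers_le {G : Type*} [Group G] {C : Set G} {m : G}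
    (hm : m ∈ C) (hle : ∀ x ∈ C, zpowers x ≤ zpowers m) : closure C = zpowers m :=
  le_antisymm (closure_le _ |>.mpr fun x hx => hle x hx (mem_zpowers x))
    (zpowers_le.mpr (subset_closure hm))

theorem Subgroup.isCyclic_closure_of_isChain_zpowers {G : Type*} [Group G] {C : Set G}
    (hfin : C.Finite) (hchain : IsChain (fun x y => zpowers x ≤ zpowers y) C) :
    IsCyclic (closure C) := by
  rcases C.eq_empty_or_nonempty with rfl | hne
  · rw [closure_empty]
    infer_instance
  · obtain ⟨m, hm, hle⟩ := hchain.exists_forall_le_of_finite hfin hne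
    rw [closure_eq_zpowers_of_forall_zpowers_le hm hle]
    infer_instance

theorem SimpleGraph.IsClique.isChain_zpowers {G : Type*} [Group G] {C : Set G}
    (hC : (reducedPowerGraph G).IsClique C) :
    IsChain (fun x y => zpowers x ≤ zpowers y) C :=
  fun _ hx _ hy hxy => (hC hx hy hxy).imp le_of_lt le_of_lt

/-- Lemma 5.3: a clique in the reduced power graph generates a cyclic subgroup. -/
theorem clique_reducedPowerGraph_closure_isCyclic (G : Type*) [Group G] [Fintype G]
    (C : Set G) (hC : (reducedPowerGraph G).IsClique C) :
    IsCyclic (Subgroup.closure C) :=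
  isCyclic_closure_of_isChain_zpowers C.toFinite hC.isChain_zpowers
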